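/- arXiv:2310.03098 — 7 statements merged into one kernel-verified Lean document; each statement's English description precedes it below -/
import Mathlib

section
/- Let CT : [n] → ℕ be sorted in ascending order and let f : [n] → [m] be a partitioning with cost J(f) = Σ_{i=1}^n CT[i] · ⌈|N_f(i)|/c⌉, where N_f(i) = {i' : f(i') = f(i)} and c ≥ 1 is a fixed chunk size. If indices i₁, i₂ satisfy CT[i₁] > CT[i₂] and |N_f(i₁)| ≥ |N_f(i₂)|, then the partitioning f' obtained by swapping the assignments of i₁ and i₂ (f'(i₁) = f(i₂), f'(i₂) = f(i₁), f'(i) = f(i) otherwise) satisfies J(f') ≤ J(f). -/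
open Finset

/-- The number of records in the same partition as record `i` under partitioning `f`. -/
def fiberCard {n m : ℕ} (f : Fin n → Fin m) (i : Fin n) : ℕ :=
  (Finset.univ.filter (fun i' => f i' = f i)).card

/-- The join cost `J(f) = Σ_i CT[i] · ⌈|N_f(i)|/c⌉` (ceiling division). -/
def joinCost {n m : ℕ} (CT : Fin n → ℕ) (c : ℕ) (f : Fin n → Fin m) : ℕ :=
  ∑ i, CT i * ((fiberCard f i + c - 1) / c)

lemma fiberCard_comp {n m : ℕ} (e : Fin n ≃ Fin n) (f : Fin n → Fin m) (i : Fin n) :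
    fiberCard (f ∘ e) i = fiberCard f (e i) := by
  unfold fiberCard
  exact Finset.card_equiv e (by simp)

/-- Swap lemma: if `CT i₁ > CT i₂` and `|N_f(i₁)| ≥ |N_f(i₂)|`, then swapping the
partition assignments of `i₁` and `i₂` does not increase the join cost. -/
theorem swap_lemma {n m c : ℕ} (hn : 0 < n) (hm : 0 < m) (hc : 1 ≤ c)
    (CT : Fin n → ℕ) (hCT : Monotone CT)
    (f : Fin n → Fin m) (i₁ i₂ : Fin n)
    (h1 : CT i₂ < CT i₁) (h2 : fiberCard f i₂ ≤ fiberCard f i₁) :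
    joinCost CT c (f ∘ Equiv.swap i₁ i₂) ≤ joinCost CT c f := by
  have hne : i₁ ≠ i₂ := by
    rintro rfl; exact lt_irrefl _ h1
  set q : Fin n → ℕ := fun j => (fiberCard f j + c - 1) / c with hq
  have hF : ∀ i, CT i * ((fiberCard (f ∘ Equiv.swap i₁ i₂) i + c - 1) / c)
      = CT i * q (Equiv.swap i₁ i₂ i) := by
    intro i; rw [fiberCard_comp]
  unfold joinCost
  simp only [hF]
  have h21 : i₂ ∈ (univ : Finset (Fin n)).erase i₁ := by
    simp [hne.symm]
  show _ ≤ ∑ i, CT i * q i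
  rw [← Finset.sum_erase_add _ _ (Finset.mem_univ i₁),
      ← Finset.sum_erase_add _ _ h21]
  conv_rhs => rw [← Finset.sum_erase_add _ _ (Finset.mem_univ i₁),
      ← Finset.sum_erase_add _ _ h21]
  have hcongr : ∑ i ∈ ((univ : Finset (Fin n)).erase i₁).erase i₂,
      CT i * q (Equiv.swap i₁ i₂ i)
      = ∑ i ∈ ((univ : Finset (Fin n)).erase i₁).erase i₂, CT i * q i := by
    apply Finset.sum_congr rfl
    intro i hi
    simp only [Finset.mem_erase] at hi
    rw [Equiv.swap_apply_of_ne_of_ne hi.2.1 hi.1]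
  rw [hcongr, Equiv.swap_apply_left, Equiv.swap_apply_right, add_assoc, add_assoc]
  apply Nat.add_le_add_left
  have hqle : q i₂ ≤ q i₁ := Nat.div_le_div_right (by omega)
  calc CT i₂ * q i₁ + CT i₁ * q i₂ ≤ CT i₂ * q i₂ + CT i₁ * q i₁ :=
        mul_add_mul_le_mul_add_mul h1.le hqle
    _ = _ := by ring
end

section
/- Let CT : [n] → ℕ be sorted in ascending order and define the cost of a partitioning f : [n] → [m] as J(f) = Σ_{i=1}^n CT[i] · ⌈|N_f(i)|/c⌉ for a fixed chunk size c ≥ 1. Then there exists a cost-minimizing partitioning f whose parts are consecutive: for every j, the set {i : f(i) = j} is an interval of [n]. -/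
open Finset

/-- Consecutive property: there is a cost-minimizing partitioning whose parts are
intervals of the sorted `CT` array. -/
theorem exists_optimal_consecutive {n m c : ℕ} (hn : 0 < n) (hm : 0 < m) (hc : 1 ≤ c)
    (CT : Fin n → ℕ) (hCT : Monotone CT) :
    ∃ f : Fin n → Fin m,
      (∀ g : Fin n → Fin m, joinCost CT c f ≤ joinCost CT c g) ∧
      (∀ i₁ i₂ i : Fin n, i₁ ≤ i → i ≤ i₂ → f i₁ = f i₂ → f i = f i₁) := by
  have hne : Nonempty (Fin m) := ⟨⟨0, hm⟩⟩
  obtain ⟨f₀, hf₀⟩ := Finite.exists_min (joinCost CT c : (Fin n → Fin m) → ℕ)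
  -- part sizes and weights
  set s : Fin m → ℕ := fun j => (univ.filter (fun i => f₀ i = j)).card with hs
  set w : Fin m → ℕ := fun j => (s j + c - 1) / c with hw
  -- permutation sorting weights descending
  set σ : Equiv.Perm (Fin m) := Fin.revPerm.trans (Tuple.sort w) with hσdef
  have hwσ : Antitone (fun k => w (σ k)) := by
    intro k l hkl
    have := Tuple.monotone_sort w (Fin.rev_le_rev.2 hkl)
    simpa [hσdef] using this
  -- prefix sums
  set P : ℕ → ℕ := fun k => ∑ j ∈ Finset.range k,
    (if hj : j < m then s (σ ⟨j, hj⟩) else 0) with hP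
  have Pmono : Monotone P := by
    intro a b hab
    exact Finset.sum_le_sum_of_subset (Finset.range_subset_range.2 hab)
  have Pm : P m = n := by
    have h1 : P m = ∑ j : Fin m, s (σ j) := by
      show (∑ j ∈ Finset.range m, if hj : j < m then s (σ ⟨j, hj⟩) else 0) = ∑ j : Fin m, s (σ j)
      rw [← Fin.sum_univ_eq_sum_range (fun j => if hj : j < m then s (σ ⟨j, hj⟩) else 0) m]
      exact Finset.sum_congr rfl fun j _ => by rw [dif_pos j.2]
    have h2 : ∑ j : Fin m, s (σ j) = ∑ j : Fin m, s j := Equiv.sum_comp σ s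
    have h3 : ∑ j : Fin m, s j = n := by
      rw [hs]
      rw [← Finset.card_eq_sum_card_fiberwise (fun i _ => Finset.mem_univ (f₀ i))]
      simp
    rw [h1, h2, h3]
  have ex : ∀ i : Fin n, ∃ k, (i : ℕ) < P (k + 1) := by
    intro i
    refine ⟨m - 1, ?_⟩
    have hm1 : m - 1 + 1 = m := by omega
    rw [hm1, Pm]
    exact i.2
  set hk : Fin n → ℕ := fun i => Nat.find (ex i) with hhk
  have hkm : ∀ i, hk i < m := by
    intro i
    have : hk i ≤ m - 1 := Nat.find_le (by
      have hm1 : m - 1 + 1 = m := by omega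
      rw [hm1, Pm]; exact i.2)
    omega
  set h : Fin n → Fin m := fun i => ⟨hk i, hkm i⟩ with hhdef
  have hchar : ∀ (i : Fin n) (k : ℕ), hk i = k ↔ (P k ≤ (i : ℕ) ∧ (i : ℕ) < P (k + 1)) := by
    intro i k
    constructor
    · rintro rfl
      refine ⟨?_, Nat.find_spec (ex i)⟩
      rcases Nat.eq_zero_or_pos (hk i) with h0 | h0
      · rw [h0]; simp [hP]
      · by_contra hcon
        push_neg at hcon
        have := Nat.find_min (ex i) (show hk i - 1 < hk i by omega)
        rw [show hk i - 1 + 1 = hk i by omega] at this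
        exact this hcon
    · rintro ⟨h1, h2⟩
      refine le_antisymm (Nat.find_le h2) ?_
      by_contra hcon
      push_neg at hcon
      have hsp : (i : ℕ) < P (hk i + 1) := Nat.find_spec (ex i)
      have : (i : ℕ) < P k := lt_of_lt_of_le hsp (Pmono hcon)
      omega
  have hmono : Monotone h := by
    intro i i' hii'
    have : Nat.find (ex i) ≤ Nat.find (ex i') :=
      Nat.find_mono (hp := ex i) (hq := ex i')
        (fun k hkk => lt_of_le_of_lt (show (i : ℕ) ≤ (i' : ℕ) from hii') hkk)
    exact this
  -- fiber cards of h
  have hfiber : ∀ k : Fin m, (univ.filter fun i : Fin n => h i = k).card = s (σ k) := by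
    intro k
    have hPk : P (k.1 + 1) = P k.1 + s (σ k) := by
      show (∑ j ∈ Finset.range (k.1 + 1), if hj : j < m then s (σ ⟨j, hj⟩) else 0) = _
      rw [Finset.sum_range_succ, dif_pos k.2]
    have hole : P (k.1 + 1) ≤ n := by rw [← Pm]; exact Pmono k.2
    have hset : (univ.filter fun i : Fin n => h i = k) =
        univ.filter fun i : Fin n => P k.1 ≤ (i : ℕ) ∧ (i : ℕ) < P (k.1 + 1) := by
      ext i
      simp only [Finset.mem_filter, Finset.mem_univ, true_and]
      rw [show (h i = k) ↔ (hk i = k.1) from ⟨fun hh => congrArg Fin.val hh, fun hh => Fin.ext hh⟩]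
      exact hchar i k.1
    rw [hset]
    have himg : (univ.filter fun i : Fin n =>
        P k.1 ≤ (i : ℕ) ∧ (i : ℕ) < P (k.1 + 1)).image Fin.val = Finset.Ico (P k.1) (P (k.1+1)) := by
      ext x
      simp only [Finset.mem_image, Finset.mem_filter, Finset.mem_univ, true_and, Finset.mem_Ico]
      constructor
      · rintro ⟨i, ⟨h1, h2⟩, rfl⟩; exact ⟨h1, h2⟩
      · rintro ⟨h1, h2⟩; exact ⟨⟨x, lt_of_lt_of_le h2 hole⟩, ⟨h1, h2⟩, rfl⟩
    have := congrArg Finset.card himg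
    rw [Finset.card_image_of_injective _ Fin.val_injective, Nat.card_Ico] at this
    omega
  -- the consecutive partitioning
  set g : Fin n → Fin m := fun i => σ (h i) with hgdef
  have hgfib : ∀ i, fiberCard g i = s (σ (h i)) := by
    intro i
    unfold fiberCard
    rw [show (univ.filter fun i' => g i' = g i) = univ.filter fun i' => h i' = h i from ?_]
    · exact hfiber (h i)
    · ext i'; simp [hgdef, σ.injective.eq_iff]
  have hJg : joinCost CT c g = ∑ i, CT i * w (σ (h i)) := by
    unfold joinCost
    exact Finset.sum_congr rfl fun i _ => by rw [hgfib i]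
  have hJf₀ : joinCost CT c f₀ = ∑ i, CT i * w (f₀ i) := rfl
  -- permutation τ matching fibers of f₀ and g
  have hcard : ∀ j : Fin m,
      Fintype.card {x : Fin n // f₀ x = j} = Fintype.card {x : Fin n // g x = j} := by
    intro j
    rw [Fintype.card_subtype, Fintype.card_subtype]
    have : (univ.filter fun x : Fin n => g x = j) = univ.filter fun x : Fin n => h x = σ.symm j := by
      ext x; simp [hgdef, Equiv.apply_eq_iff_eq_symm_apply]
    rw [this, hfiber (σ.symm j), Equiv.apply_symm_apply]
  set e : ∀ j : Fin m, {x : Fin n // f₀ x = j} ≃ {x : Fin n // g x = j} :=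
    fun j => Fintype.equivOfCardEq (hcard j) with hedef
  set τ : Equiv.Perm (Fin n) :=
    (Equiv.sigmaFiberEquiv f₀).symm.trans ((Equiv.sigmaCongrRight e).trans
      (Equiv.sigmaFiberEquiv g)) with hτdef
  have hτ : ∀ x, g (τ x) = f₀ x := by
    intro x
    have : τ x = ((e (f₀ x)) ⟨x, rfl⟩).1 := rfl
    rw [this]
    exact ((e (f₀ x)) ⟨x, rfl⟩).2
  -- rearrangement inequality over ℤ
  have hanti : Antivary (fun i : Fin n => (CT i : ℤ)) (fun i : Fin n => (w (g i) : ℤ)) := by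
    intro i j hlt
    rcases le_total i j with hij | hij
    · exfalso
      have hle' : w (g j) ≤ w (g i) := hwσ (hmono hij)
      have : ((w (g j) : ℤ)) ≤ ((w (g i)) : ℤ) := by exact_mod_cast hle'
      simp only at hlt
      omega
    · show ((CT j : ℤ)) ≤ ((CT i) : ℤ)
      exact_mod_cast hCT hij
  have key : ∑ i, (CT i : ℤ) • (w (g i) : ℤ) ≤ ∑ i, (CT i : ℤ) • (w (g (τ i)) : ℤ) :=
    hanti.sum_smul_le_sum_smul_comp_perm (σ := τ)
  have hle : joinCost CT c g ≤ joinCost CT c f₀ := by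
    rw [hJg, hJf₀]
    have : ∑ i, CT i * w (σ (h i)) ≤ ∑ i, CT i * w (f₀ i) := by
      have key' : ∑ i, (CT i : ℤ) * (w (g i) : ℤ) ≤ ∑ i, (CT i : ℤ) * (w (f₀ i) : ℤ) := by
        simpa [smul_eq_mul, hτ] using key
      have := key'
      push_cast at this
      exact_mod_cast this
    simpa [hgdef] using this
  refine ⟨g, fun g' => le_trans hle (hf₀ g'), ?_⟩
  intro i₁ i₂ i hi1 hi2 heq
  have hh : h i₁ = h i₂ := σ.injective heq
  have : h i = h i₁ := le_antisymm (hh ▸ hmono hi2) (hmono hi1)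
  simp [hgdef, this]
end

section
/- Let CT : [n] → ℕ be sorted in ascending order, c ≥ 1 a chunk size, and J(f) = Σ_i CT[i]·⌈|N_f(i)|/c⌉ the cost of a partitioning f : [n] → [m]. Then there exists an optimal (cost-minimizing) partitioning with consecutive parts P₁ ≼ P₂ ≼ ... ≼ P_m (ordered by position on the sorted array) such that ⌈|P₁|/c⌉ ≥ ⌈|P₂|/c⌉ ≥ ... ≥ ⌈|P_m|/c⌉. -/
open Finset

/-- The size of partition `j` under partitioning `f`. -/
def partSize {n m : ℕ} (f : Fin n → Fin m) (j : Fin m) : ℕ :=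
  (Finset.univ.filter (fun i => f i = j)).card

namespace OptPart

variable {n m : ℕ}

/-- Prefix sums of sizes. -/
def T (m : ℕ) (s : Fin m → ℕ) (k : ℕ) : ℕ := ∑ j : Fin m, if (j : ℕ) < k then s j else 0

lemma T_zero (s : Fin m → ℕ) : T m s 0 = 0 := by simp [T]

lemma T_mono (s : Fin m → ℕ) : Monotone (T m s) := by
  intro a b hab
  refine Finset.sum_le_sum fun j _ => ?_
  by_cases h : (j : ℕ) < a
  · simp [h, lt_of_lt_of_le h hab]
  · simp only [h, if_false]
    positivity

lemma T_top (s : Fin m → ℕ) : T m s m = ∑ j, s j := by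
  refine Finset.sum_congr rfl fun j _ => ?_
  simp [j.isLt]

lemma T_succ (s : Fin m → ℕ) (k : ℕ) (hk : k < m) :
    T m s (k + 1) = T m s k + s ⟨k, hk⟩ := by
  have : ∀ j : Fin m, (if (j : ℕ) < k + 1 then s j else 0)
      = (if (j : ℕ) < k then s j else 0) + (if (j : ℕ) = k then s j else 0) := by
    intro j
    rcases lt_trichotomy (j : ℕ) k with h | h | h
    · simp [h, Nat.lt_succ_of_lt h, Nat.ne_of_lt h]
    · simp [h]
    · simp [Nat.lt_irrefl, not_lt_of_gt h, not_lt_of_gt (Nat.lt_succ_of_lt h),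
        (Nat.ne_of_lt h).symm, Nat.lt_succ_iff, not_le_of_gt h]
  rw [T, Finset.sum_congr rfl fun j _ => this j, Finset.sum_add_distrib]
  congr 1
  have : ∀ j : Fin m, ((j : ℕ) = k) = (j = ⟨k, hk⟩) := by
    intro j; ext; exact ⟨fun h => Fin.ext h, fun h => by rw [h]⟩
  simp only [this]
  rw [Finset.sum_ite_eq' univ (⟨k, hk⟩ : Fin m) s]
  simp

/-- A downward-closed finset of naturals is an initial segment. -/
lemma dc_mem_iff (S : Finset ℕ) (h : ∀ a ∈ S, ∀ b < a, b ∈ S) (b : ℕ) :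
    b ∈ S ↔ b < S.card := by
  constructor
  · intro hb
    have hsub : Finset.range (b + 1) ⊆ S := by
      intro x hx
      rw [Finset.mem_range, Nat.lt_succ_iff] at hx
      rcases eq_or_lt_of_le hx with rfl | hx
      · exact hb
      · exact h b hb x hx
    calc b < b + 1 := Nat.lt_succ_self b
    _ = (Finset.range (b+1)).card := (Finset.card_range _).symm
    _ ≤ S.card := Finset.card_le_card hsub
  · intro hb
    by_contra hbS
    have hsub : S ⊆ Finset.range b := by
      intro x hx
      rw [Finset.mem_range]
      by_contra hxb
      push_neg at hxb
      rcases eq_or_lt_of_le hxb with rfl | hxb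
      · exact hbS hx
      · exact hbS (h x hx b hxb)
    have := Finset.card_le_card hsub
    rw [Finset.card_range] at this
    omega

/-- The block index of position `i`. -/
def cnt (s : Fin m → ℕ) (i : ℕ) : ℕ :=
  ((Finset.range m).filter (fun k => T m s (k + 1) ≤ i)).card

lemma cnt_dc (s : Fin m → ℕ) (i : ℕ) :
    ∀ b, b ∈ (Finset.range m).filter (fun k => T m s (k + 1) ≤ i) ↔ b < cnt s i := by
  apply dc_mem_iff
  intro a ha b hb
  simp only [Finset.mem_filter, Finset.mem_range] at ha ⊢
  exact ⟨lt_trans hb ha.1, le_trans (T_mono s (by omega)) ha.2⟩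

lemma cnt_lt (s : Fin m → ℕ) (i : ℕ) (hi : i < T m s m) (hm : 0 < m) : cnt s i < m := by
  have hle : cnt s i ≤ m := le_trans (Finset.card_le_card (Finset.filter_subset _ _))
    (le_of_eq (Finset.card_range m))
  rcases eq_or_lt_of_le hle with heq | h
  · exfalso
    have : m - 1 ∈ (Finset.range m).filter (fun k => T m s (k + 1) ≤ i) := by
      rw [cnt_dc]; omega
    simp only [Finset.mem_filter] at this
    have h2 := this.2
    have : m - 1 + 1 = m := by omega
    rw [this] at h2
    omega
  · exact h

lemma cnt_spec (s : Fin m → ℕ) (i : ℕ) (hi : i < T m s m) (hm : 0 < m) :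
    T m s (cnt s i) ≤ i ∧ i < T m s (cnt s i + 1) := by
  constructor
  · rcases Nat.eq_zero_or_pos (cnt s i) with h0 | h0
    · rw [h0, T_zero]; omega
    · have : cnt s i - 1 ∈ (Finset.range m).filter (fun k => T m s (k + 1) ≤ i) := by
        rw [cnt_dc]; omega
      simp only [Finset.mem_filter] at this
      have := this.2
      have he : cnt s i - 1 + 1 = cnt s i := by omega
      rwa [he] at this
  · have : ¬ (cnt s i ∈ (Finset.range m).filter (fun k => T m s (k + 1) ≤ i)) := by
      rw [cnt_dc]; omega
    simp only [Finset.mem_filter, Finset.mem_range, not_and, not_le] at this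
    exact this (cnt_lt s i hi hm)

lemma cnt_eq (s : Fin m → ℕ) (i j : ℕ) (hj : j < m)
    (h1 : T m s j ≤ i) (h2 : i < T m s (j + 1)) : cnt s i = j := by
  have : (Finset.range m).filter (fun k => T m s (k + 1) ≤ i) = Finset.range j := by
    ext b
    simp only [Finset.mem_filter, Finset.mem_range]
    constructor
    · rintro ⟨hbm, hb⟩
      by_contra hbj
      push_neg at hbj
      exact absurd (le_trans (T_mono s (by omega)) hb) (not_le_of_gt h2)
    · intro hbj
      exact ⟨by omega, le_trans (T_mono s (by omega)) h1⟩
  rw [cnt, this, Finset.card_range]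

lemma cnt_mono (s : Fin m → ℕ) : Monotone (cnt s) := by
  intro a b hab
  apply Finset.card_le_card
  intro k hk
  simp only [Finset.mem_filter] at *
  exact ⟨hk.1, le_trans hk.2 hab⟩

lemma card_val_interval (a b : ℕ) (hb : b ≤ n) :
    (Finset.univ.filter (fun i : Fin n => a ≤ i.val ∧ i.val < b)).card = b - a := by
  rw [← Nat.card_Ico a b]
  rw [← Finset.card_image_of_injective (Finset.univ.filter
    (fun i : Fin n => a ≤ i.val ∧ i.val < b)) Fin.val_injective]
  congr 1
  ext x
  simp only [Finset.mem_image, Finset.mem_filter, Finset.mem_univ, true_and, Finset.mem_Ico]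
  constructor
  · rintro ⟨i, hi, rfl⟩; exact hi
  · rintro ⟨h1, h2⟩; exact ⟨⟨x, by omega⟩, ⟨h1, h2⟩, rfl⟩

/-- The consecutive-blocks partitioning with block sizes `s`. -/
def blockFun (hm : 0 < m) (s : Fin m → ℕ) (hs : ∑ j, s j = n) : Fin n → Fin m :=
  fun i => ⟨cnt s i.val, cnt_lt s i.val (by rw [T_top, hs]; exact i.isLt) hm⟩

lemma blockFun_mono (hm : 0 < m) (s : Fin m → ℕ) (hs : ∑ j, s j = n) :
    Monotone (blockFun hm s hs) := by
  intro a b hab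
  simp only [blockFun, Fin.mk_le_mk]
  exact cnt_mono s hab

lemma partSize_blockFun (hm : 0 < m) (s : Fin m → ℕ) (hs : ∑ j, s j = n) (j : Fin m) :
    partSize (blockFun hm s hs) j = s j := by
  have hT : T m s m = n := by rw [T_top, hs]
  have hfib : Finset.univ.filter (fun i : Fin n => blockFun hm s hs i = j)
      = Finset.univ.filter (fun i : Fin n => T m s j ≤ i.val ∧ i.val < T m s (j.val + 1)) := by
    ext i
    simp only [Finset.mem_filter, Finset.mem_univ, true_and]
    constructor
    · intro h
      have : cnt s i.val = j.val := congrArg Fin.val h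
      rw [← this]
      exact cnt_spec s i.val (by rw [hT]; exact i.isLt) hm
    · rintro ⟨h1, h2⟩
      exact Fin.ext (cnt_eq s i.val j.val j.isLt h1 h2)
  have hb : T m s (j.val + 1) ≤ n := by
    rw [← hT]; exact T_mono s j.isLt
  rw [partSize, hfib, card_val_interval _ _ hb, T_succ s j.val j.isLt]
  simp

lemma strictMono_le_apply {k : ℕ} (F : Fin k → ℕ) (hF : StrictMono F) :
    ∀ x : Fin k, x.val ≤ F x := by
  have H : ∀ v : ℕ, ∀ h : v < k, v ≤ F ⟨v, h⟩ := by
    intro v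
    induction v with
    | zero => intro h; exact Nat.zero_le _
    | succ v ih =>
      intro h
      have h' : v < k := by omega
      have h1 := ih h'
      have h2 : F ⟨v, h'⟩ < F ⟨v + 1, h⟩ := hF (by simp [Fin.lt_def])
      omega
  intro x
  have := H x.val x.isLt
  simpa using this

/-- Sum of `CT` over the first `A.card` indices is at most the sum over `A`. -/
lemma sum_first_le {n : ℕ} (CT : Fin n → ℕ) (hCT : Monotone CT) (A : Finset (Fin n)) :
    ∑ i ∈ Finset.univ.filter (fun i : Fin n => i.val < A.card), CT i ≤ ∑ i ∈ A, CT i := by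
  set k := A.card with hk
  have hkn : k ≤ n := by
    rw [hk]
    calc A.card ≤ (Finset.univ : Finset (Fin n)).card := Finset.card_le_card (Finset.subset_univ A)
    _ = n := Finset.card_fin n
  have e := A.orderIsoOfFin hk.symm
  have hstrict : StrictMono (fun x : Fin k => ((e x : Fin n)).val) := by
    intro a b hab
    exact (e.strictMono hab : (e a : Fin n) < e b)
  have key : ∀ x : Fin k, x.val ≤ ((e x : Fin n)).val := strictMono_le_apply _ hstrict
  have hL : ∑ i ∈ Finset.univ.filter (fun i : Fin n => i.val < k), CT i
      = ∑ x : Fin k, CT (Fin.castLE hkn x) := by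
    refine Finset.sum_bij' (fun (i : Fin n) (hi : i ∈ Finset.univ.filter (fun i : Fin n => i.val < k)) =>
        (⟨i.val, by simpa using hi⟩ : Fin k))
      (fun (x : Fin k) _ => Fin.castLE hkn x) ?_ ?_ ?_ ?_ ?_
    · intro a ha; exact Finset.mem_univ _
    · intro x hx
      simp only [Finset.mem_filter, Finset.mem_univ, true_and]
      exact x.isLt
    · intro a ha; rfl
    · intro x hx; rfl
    · intro a ha; rfl
  have hR : ∑ i ∈ A, CT i = ∑ x : Fin k, CT (e x) := by
    rw [← Finset.sum_coe_sort A CT]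
    exact (Equiv.sum_comp e.toEquiv (fun a => CT a)).symm
  rw [hL, hR]
  apply Finset.sum_le_sum
  intro x _
  apply hCT
  exact key x

lemma layer_cake {n B : ℕ} (CT w : Fin n → ℕ) (hw : ∀ i, w i ≤ B) :
    ∑ i, CT i * w i
      = ∑ t ∈ Finset.range B, ∑ i ∈ Finset.univ.filter (fun i => t < w i), CT i := by
  have h1 : ∀ t, ∑ i ∈ Finset.univ.filter (fun i => t < w i), CT i
      = ∑ i : Fin n, if t < w i then CT i else 0 := by
    intro t; rw [Finset.sum_filter]
  rw [Finset.sum_congr rfl fun t _ => h1 t, Finset.sum_comm]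
  apply Finset.sum_congr rfl
  intro i _
  have h2 : (Finset.range B).filter (fun t => t < w i) = Finset.range (w i) := by
    ext t
    simp only [Finset.mem_filter, Finset.mem_range]
    constructor
    · rintro ⟨_, ht⟩; exact ht
    · intro ht; exact ⟨lt_of_lt_of_le ht (hw i), ht⟩
  symm
  calc ∑ t ∈ Finset.range B, (if t < w i then CT i else 0)
      = ∑ t ∈ (Finset.range B).filter (fun t => t < w i), CT i := (Finset.sum_filter _ _).symm
    _ = ∑ t ∈ Finset.range (w i), CT i := by rw [h2]
    _ = CT i * w i := by rw [Finset.sum_const, Finset.card_range, smul_eq_mul, mul_comm]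

lemma downset_eq_filter {n : ℕ} (A : Finset (Fin n))
    (h : ∀ i ∈ A, ∀ i' : Fin n, i' ≤ i → i' ∈ A) :
    A = Finset.univ.filter (fun i : Fin n => i.val < A.card) := by
  have hdc : ∀ a ∈ A.map Fin.valEmbedding, ∀ b < a, b ∈ A.map Fin.valEmbedding := by
    intro a ha b hb
    simp only [Finset.mem_map, Fin.valEmbedding_apply] at ha ⊢
    obtain ⟨i, hi, rfl⟩ := ha
    exact ⟨⟨b, lt_trans hb i.isLt⟩, h i hi _ (by simp [Fin.le_def]; omega), rfl⟩
  have hmem := dc_mem_iff _ hdc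
  ext i
  simp only [Finset.mem_filter, Finset.mem_univ, true_and]
  have : i ∈ A ↔ (i : ℕ) ∈ A.map Fin.valEmbedding := by
    simp only [Finset.mem_map, Fin.valEmbedding_apply]
    constructor
    · intro h; exact ⟨i, h, rfl⟩
    · rintro ⟨i', hi', he⟩; rwa [← Fin.ext he]
  rw [this, hmem, Finset.card_map]

lemma card_filter_fiber {n m : ℕ} (h : Fin n → Fin m) (u : Fin m → ℕ) (t : ℕ) :
    (Finset.univ.filter (fun i => t < u (h i))).card
      = ∑ j ∈ Finset.univ.filter (fun j => t < u j), partSize h j := by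
  rw [Finset.card_eq_sum_card_fiberwise
    (f := h) (t := Finset.univ.filter (fun j => t < u j))
    (fun i hi => by simpa using (Finset.mem_filter.mp hi).2)]
  apply Finset.sum_congr rfl
  intro j hj
  rw [Finset.mem_filter] at hj
  unfold partSize
  congr 1
  ext i
  simp only [Finset.mem_filter, Finset.mem_univ, true_and]
  constructor
  · rintro ⟨_, h2⟩; exact h2
  · intro h2; exact ⟨by rw [h2]; exact hj.2, h2⟩

lemma key_le {n m c : ℕ} (hm : 0 < m) (CT : Fin n → ℕ) (hCT : Monotone CT)
    (g : Fin n → Fin m) (s' : Fin m → ℕ) (hs' : ∑ j, s' j = n)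
    (π : Equiv.Perm (Fin m)) (hπ : ∀ j, s' j = partSize g (π j))
    (hanti : Antitone s') :
    joinCost CT c (blockFun hm s' hs') ≤ joinCost CT c g := by
  set f := blockFun hm s' hs' with hf
  have hceilc_mono : Monotone (fun x => (x + c - 1) / c) := by
    intro a b hab; apply Nat.div_le_div_right; omega
  have hJ : ∀ h : Fin n → Fin m,
      joinCost CT c h = ∑ i, CT i * ((partSize h (h i) + c - 1) / c) := by
    intro h; rfl
  have hpsn : ∀ (h : Fin n → Fin m) (j : Fin m), partSize h j ≤ n := by
    intro h j
    calc partSize h j ≤ (Finset.univ : Finset (Fin n)).card :=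
          Finset.card_le_card (Finset.filter_subset _ _)
      _ = n := Finset.card_fin n
  have hwB : ∀ (h : Fin n → Fin m) (i : Fin n),
      (partSize h (h i) + c - 1) / c ≤ (n + c - 1) / c := fun h i =>
    hceilc_mono (hpsn h (h i))
  rw [hJ f, hJ g,
    layer_cake CT (fun i => (partSize f (f i) + c - 1) / c) (hwB f),
    layer_cake CT (fun i => (partSize g (g i) + c - 1) / c) (hwB g)]
  apply Finset.sum_le_sum
  intro t _
  have hps : ∀ j, partSize f j = s' j := partSize_blockFun hm s' hs'
  set Af := Finset.univ.filter (fun i => t < (partSize f (f i) + c - 1) / c) with hAf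
  set Ag := Finset.univ.filter (fun i => t < (partSize g (g i) + c - 1) / c) with hAg
  have hcard : Af.card = Ag.card := by
    rw [hAf, hAg, card_filter_fiber f (fun j => (partSize f j + c - 1) / c) t,
      card_filter_fiber g (fun j => (partSize g j + c - 1) / c) t,
      Finset.sum_filter, Finset.sum_filter]
    have h1 : ∀ j : Fin m,
        (if t < (partSize f j + c - 1) / c then partSize f j else 0)
          = (if t < (partSize g (π j) + c - 1) / c then partSize g (π j) else 0) := by
      intro j; rw [hps j, hπ j]
    rw [Finset.sum_congr rfl fun j _ => h1 j]
    exact Equiv.sum_comp π (fun j => if t < (partSize g j + c - 1) / c then partSize g j else 0)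
  have hdown : ∀ i ∈ Af, ∀ i' : Fin n, i' ≤ i → i' ∈ Af := by
    intro i hi i' hle
    rw [hAf, Finset.mem_filter] at hi ⊢
    refine ⟨Finset.mem_univ _, ?_⟩
    have h1 : f i' ≤ f i := blockFun_mono hm s' hs' hle
    have h2 : partSize f (f i) ≤ partSize f (f i') := by
      rw [hps, hps]; exact hanti h1
    exact lt_of_lt_of_le hi.2 (hceilc_mono h2)
  calc ∑ i ∈ Af, CT i
      = ∑ i ∈ Finset.univ.filter (fun i : Fin n => i.val < Af.card), CT i := by
        rw [← downset_eq_filter Af hdown]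
    _ = ∑ i ∈ Finset.univ.filter (fun i : Fin n => i.val < Ag.card), CT i := by rw [hcard]
    _ ≤ ∑ i ∈ Ag, CT i := sum_first_le CT hCT Ag

end OptPart

open OptPart

/-- There is an optimal partitioning with consecutive parts, listed by position
(`f` monotone), whose chunk counts `⌈|P_j|/c⌉` are weakly decreasing. -/
theorem exists_optimal_consecutive_weaklyOrdered {n m c : ℕ}
    (hn : 0 < n) (hm : 0 < m) (hc : 1 ≤ c)
    (CT : Fin n → ℕ) (hCT : Monotone CT) :
    ∃ f : Fin n → Fin m,
      (∀ g : Fin n → Fin m, joinCost CT c f ≤ joinCost CT c g) ∧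
      Monotone f ∧
      (∀ j j' : Fin m, j ≤ j' →
        (partSize f j' + c - 1) / c ≤ (partSize f j + c - 1) / c) := by
  obtain ⟨g₀, -, hg₀⟩ := Finset.exists_min_image (Finset.univ : Finset (Fin n → Fin m))
    (joinCost CT c) ⟨fun _ => ⟨0, hm⟩, Finset.mem_univ _⟩
  set s : Fin m → ℕ := fun j => partSize g₀ j with hs_def
  set σ := Tuple.sort s with hσ
  set π : Equiv.Perm (Fin m) := Fin.revPerm.trans σ with hπdef
  set s' : Fin m → ℕ := fun j => s (π j) with hs'_def
  have hπ : ∀ j, s' j = partSize g₀ (π j) := fun j => rfl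
  have hanti : Antitone s' := by
    intro a b hab
    have h1 : Fin.rev b ≤ Fin.rev a := Fin.rev_le_rev.mpr hab
    exact Tuple.monotone_sort s h1
  have hs' : ∑ j, s' j = n := by
    have h1 : ∑ j, s' j = ∑ j, s j := Equiv.sum_comp π s
    have h2 : (Finset.univ : Finset (Fin n)).card = ∑ j, partSize g₀ j :=
      Finset.card_eq_sum_card_fiberwise (f := g₀) (fun x _ => Finset.mem_univ _)
    rw [Finset.card_fin] at h2
    rw [h1, ← h2]
  refine ⟨blockFun hm s' hs', ?_, blockFun_mono hm s' hs', ?_⟩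
  · intro g
    exact le_trans (key_le hm CT hCT g₀ s' hs' π hπ hanti) (hg₀ g (Finset.mem_univ g))
  · intro j j' hjj'
    rw [partSize_blockFun hm s' hs', partSize_blockFun hm s' hs']
    have := hanti hjj'
    apply Nat.div_le_div_right
    omega
end

section
/- If n items are partitioned into j nonempty parts P₁, ..., P_j satisfying the weakly-ordered property ⌈|P₁|/c⌉ ≥ ⌈|P₂|/c⌉ ≥ ... ≥ ⌈|P_j|/c⌉ for a chunk size c ≥ 1, then |P₁| ≥ ⌊(n−1)/j⌋ + 1 − c, i.e., the first part contains at least ⌊(n−1)/j⌋ + 1 − c items. -/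
open Finset

/-- Pigeonhole lower bound for the first part of a weakly-ordered partition:
if `n` items are split into `j` nonempty parts of sizes `a 0, ..., a (j-1)` with
`⌈a k / c⌉` weakly decreasing, then `|P₁| ≥ ⌊(n−1)/j⌋ + 1 − c`. -/
theorem first_part_lower_bound {n j c : ℕ} (hn : 0 < n) (hj : 0 < j) (hc : 1 ≤ c)
    (a : Fin j → ℕ) (hpos : ∀ k, 0 < a k) (hsum : ∑ k, a k = n)
    (hord : ∀ k k' : Fin j, k ≤ k' → (a k' + c - 1) / c ≤ (a k + c - 1) / c) :
    (n - 1) / j + 1 ≤ a ⟨0, hj⟩ + c := by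
  set z : Fin j := ⟨0, hj⟩ with hz
  have key : ∀ k : Fin j, a k ≤ a z + c - 1 := by
    intro k
    have h1 := hord z k (Fin.mk_le_of_le_val (Nat.zero_le _))
    have h2 := Nat.div_add_mod (a k + c - 1) c
    have h3 := Nat.mod_lt (a k + c - 1) (show 0 < c by omega)
    have h4 := Nat.div_add_mod (a z + c - 1) c
    have h5 : c * ((a k + c - 1) / c) ≤ c * ((a z + c - 1) / c) :=
      Nat.mul_le_mul_left c h1
    have := hpos k
    omega
  have hle : n ≤ j * (a z + c - 1) := by
    calc n = ∑ k, a k := hsum.symm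
    _ ≤ ∑ _k : Fin j, (a z + c - 1) := Finset.sum_le_sum fun k _ => key k
    _ = j * (a z + c - 1) := by simp [Finset.sum_const, mul_comm]
  have h0 := hpos z
  have : (n - 1) / j < a z + c := by
    rw [Nat.div_lt_iff_lt_mul hj]
    calc n - 1 < n := by omega
    _ ≤ j * (a z + c - 1) := hle
    _ < (a z + c) * j := by
        have : a z + c - 1 < a z + c := by omega
        calc j * (a z + c - 1) < j * (a z + c) := Nat.mul_lt_mul_of_le_of_lt (le_refl j) this hj
        _ = (a z + c) * j := mul_comm _ _
  omega
end

section
/- If n items are partitioned into j nonempty parts P₁, ..., P_j satisfying ⌈|P₁|/c⌉ ≥ ... ≥ ⌈|P_j|/c⌉ for chunk size c ≥ 1, then |P_j| ≤ ⌊n/j⌋ + c, i.e., the last part contains at most ⌊n/j⌋ + c items. -/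
open Finset

/-- Pigeonhole upper bound for the last part of a weakly-ordered partition:
if `n` items are split into `j` nonempty parts of sizes `a 0, ..., a (j-1)` with
`⌈a k / c⌉` weakly decreasing, then the last part has at most `⌊n/j⌋ + c` items. -/
theorem last_part_upper_bound {n j c : ℕ} (hn : 0 < n) (hj : 0 < j) (hc : 1 ≤ c)
    (a : Fin j → ℕ) (hpos : ∀ k, 0 < a k) (hsum : ∑ k, a k = n)
    (hord : ∀ k k' : Fin j, k ≤ k' → (a k' + c - 1) / c ≤ (a k + c - 1) / c) :
    a ⟨j - 1, by omega⟩ ≤ n / j + c := by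
  set last : Fin j := ⟨j - 1, by omega⟩ with hlast
  set L := a last with hL
  -- key: L ≤ a k + c - 1 for every k
  have key : ∀ k : Fin j, L ≤ a k + c - 1 := by
    intro k
    by_contra h
    push_neg at h
    have hk : a k + c ≤ L := by omega
    have h1 := hord k last (by
      have := k.isLt
      exact Fin.mk_le_mk.mpr (by omega) |>.trans_eq rfl)
    rw [← hL] at h1
    have h2 : (a k + c - 1) / c + 1 ≤ (L + c - 1) / c := by
      have : (a k + c - 1 + c) / c ≤ (L + c - 1) / c :=
        Nat.div_le_div_right (by omega)
      rwa [Nat.add_div_right _ (by omega)] at this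
    omega
  have hsum' : j * (L - (c - 1)) ≤ n := by
    calc j * (L - (c - 1)) = ∑ _k : Fin j, (L - (c - 1)) := by
          rw [Finset.sum_const, Finset.card_univ, Fintype.card_fin, smul_eq_mul]
      _ ≤ ∑ k, a k := Finset.sum_le_sum (fun k _ => by have := key k; omega)
      _ = n := hsum
  have : L - (c - 1) ≤ n / j := by
    rw [Nat.le_div_iff_mul_le hj]
    calc (L - (c - 1)) * j = j * (L - (c - 1)) := Nat.mul_comm _ _
      _ ≤ n := hsum'
  omega
end

section
/- Let CT : [n] → ℕ be sorted in ascending order. Among all choices of a memory-resident set K_mem ⊆ [n] of fixed size k (with the remaining indices partitioned optimally), the choice minimizing the total join cost can be taken to be the top-k set, i.e., K_mem = {n−k+1, ..., n}, the k indices with the largest CT values. -/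
open Finset

/-- The cost of joining the disk-resident index set `D` under partitioning `f`:
`Σ_{i∈D} CT[i]·⌈|N_f(i) ∩ D|/c⌉ + μ·Σ_{i∈D} CT[i]`. -/
noncomputable def diskCost {n m : ℕ} (CT : Fin n → ℕ) (c : ℕ) (μ : ℝ)
    (D : Finset (Fin n)) (f : Fin n → Fin m) : ℝ :=
  ((∑ i ∈ D, CT i * (((D.filter (fun i' => f i' = f i)).card + c - 1) / c) : ℕ) : ℝ)
    + μ * ((∑ i ∈ D, CT i : ℕ) : ℝ)

/-- With `CT` sorted ascending, among all memory-resident sets of size `k`, caching the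
top-`k` keys (the `k` indices with the largest `CT` values) is optimal: the minimal
cost over partitionings of the complement of the top-`k` set is at most the minimal
cost over partitionings of the complement of any size-`k` set `K`. -/
theorem topk_caching_optimal {n k m c : ℕ}
    (hn : 0 < n) (hk : k ≤ n) (hm : 0 < m) (hc : 1 ≤ c)
    (CT : Fin n → ℕ) (hCT : Monotone CT) (μ : ℝ) (hμ : 0 ≤ μ) :
    ∀ K : Finset (Fin n), K.card = k →
      ∀ g : Fin n → Fin m, ∃ f : Fin n → Fin m,
        diskCost CT c μ (Finset.univ.filter (fun i : Fin n => (i : ℕ) < n - k)) f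
          ≤ diskCost CT c μ (Finset.univ \ K) g := by
  intro K hK g
  have hNn : n - k ≤ n := Nat.sub_le n k
  set N := n - k with hNdef
  set D : Finset (Fin n) := Finset.univ \ K with hDdef
  have hDcard : D.card = N := by
    rw [hDdef, Finset.card_sdiff_of_subset (Finset.subset_univ K), Finset.card_univ,
      Fintype.card_fin, hK]
  set b := D.orderEmbOfFin hDcard with hbdef
  have hble : ∀ j : Fin N, (j : ℕ) ≤ (b j : ℕ) := by
    intro j
    obtain ⟨jv, hj⟩ := j
    induction jv with
    | zero => exact Nat.zero_le _
    | succ t ih =>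
      have ht : t < N := Nat.lt_of_succ_lt hj
      have h1 : b ⟨t, ht⟩ < b ⟨t + 1, hj⟩ :=
        (D.orderEmbOfFin hDcard).strictMono (by simp [Fin.lt_def])
      have h2 := ih ht
      have h3 := Fin.lt_def.mp h1
      simp only at h2 h3 ⊢
      omega
  set D0 : Finset (Fin n) := Finset.univ.filter (fun i : Fin n => (i : ℕ) < N) with hD0def
  have hmemD0 : ∀ i : Fin n, i ∈ D0 ↔ (i : ℕ) < N := by
    intro i; simp [hD0def]
  set Φ : Fin n → Fin n := fun i => if h : (i : ℕ) < N then b ⟨i, h⟩ else i with hΦdef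
  have hΦval : ∀ (i : Fin n) (h : (i : ℕ) < N), Φ i = b ⟨i, h⟩ := by
    intro i h; simp only [hΦdef, dif_pos h]
  have hΦmem : ∀ i ∈ D0, Φ i ∈ D := by
    intro i hi
    rw [hΦval i ((hmemD0 i).mp hi)]
    exact Finset.orderEmbOfFin_mem D hDcard _
  have hΦinj : ∀ i₁ ∈ D0, ∀ i₂ ∈ D0, Φ i₁ = Φ i₂ → i₁ = i₂ := by
    intro i₁ h₁ i₂ h₂ he
    have h1 := (hmemD0 i₁).mp h₁
    have h2 := (hmemD0 i₂).mp h₂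
    rw [hΦval i₁ h1, hΦval i₂ h2] at he
    have := b.injective he
    have hval : (i₁ : ℕ) = (i₂ : ℕ) := by simpa using this
    exact Fin.ext hval
  have hΦsurj : ∀ d ∈ D, ∃ i, ∃ hi : i ∈ D0, Φ i = d := by
    intro d hd
    obtain ⟨j, hj⟩ : ∃ j, b j = d := by
      have : d ∈ Set.range b := by
        rw [hbdef, Finset.range_orderEmbOfFin]; exact hd
      exact this
    refine ⟨⟨(j : ℕ), lt_of_lt_of_le j.isLt hNn⟩, (hmemD0 _).mpr (by simpa using j.isLt), ?_⟩
    rw [hΦval _ (by simpa using j.isLt)]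
    rw [← hj]
  have hΦle : ∀ i ∈ D0, i ≤ Φ i := by
    intro i hi
    have h := (hmemD0 i).mp hi
    rw [hΦval i h, Fin.le_def]
    exact hble ⟨(i : ℕ), h⟩
  refine ⟨fun i => g (Φ i), ?_⟩
  -- the cell-card equality
  have cardeq : ∀ i ∈ D0,
      (D0.filter (fun i' => g (Φ i') = g (Φ i))).card
        = (D.filter (fun j' => g j' = g (Φ i))).card := by
    intro i hi
    refine Finset.card_bij (fun i' _ => Φ i') ?_ ?_ ?_
    · intro a ha
      rw [Finset.mem_filter] at ha ⊢
      exact ⟨hΦmem a ha.1, ha.2⟩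
    · intro a₁ ha₁ a₂ ha₂ he
      exact hΦinj a₁ (Finset.mem_filter.mp ha₁).1 a₂ (Finset.mem_filter.mp ha₂).1 he
    · intro d hd
      rw [Finset.mem_filter] at hd
      obtain ⟨a, ha, hae⟩ := hΦsurj d hd.1
      exact ⟨a, Finset.mem_filter.mpr ⟨ha, by rw [hae]; exact hd.2⟩, hae⟩
  have hsum1 : (∑ i ∈ D0, CT i * (((D0.filter (fun i' => g (Φ i') = g (Φ i))).card + c - 1) / c))
      ≤ ∑ j ∈ D, CT j * (((D.filter (fun j' => g j' = g j)).card + c - 1) / c) := by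
    have step1 : (∑ i ∈ D0, CT i * (((D0.filter (fun i' => g (Φ i') = g (Φ i))).card + c - 1) / c))
        ≤ ∑ i ∈ D0, CT (Φ i) * (((D.filter (fun j' => g j' = g (Φ i))).card + c - 1) / c) := by
      refine Finset.sum_le_sum ?_
      intro i hi
      rw [cardeq i hi]
      exact Nat.mul_le_mul_right _ (hCT (hΦle i hi))
    refine step1.trans (le_of_eq ?_)
    exact Finset.sum_bij (fun i _ => Φ i) hΦmem hΦinj hΦsurj (fun i hi => rfl)
  have hsum2 : (∑ i ∈ D0, CT i) ≤ ∑ j ∈ D, CT j := by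
    have step1 : (∑ i ∈ D0, CT i) ≤ ∑ i ∈ D0, CT (Φ i) :=
      Finset.sum_le_sum fun i hi => hCT (hΦle i hi)
    refine step1.trans (le_of_eq ?_)
    exact Finset.sum_bij (fun i _ => Φ i) hΦmem hΦinj hΦsurj (fun i hi => rfl)
  unfold diskCost
  refine add_le_add ?_ (mul_le_mul_of_nonneg_left (Nat.cast_le.mpr hsum2) hμ)
  exact_mod_cast hsum1
end

section
/- Let CT : [n] → ℕ be monotone nondecreasing, c ≥ 1, and consider interval partitionings of [n] into exactly m consecutive parts. If the parts are listed left-to-right as P₁,...,P_m on the sorted array (so P₁ contains the smallest CT values), then in an optimal interval partitioning the leftmost part has the largest chunk count: ⌈|P₁|/c⌉ ≥ ⌈|P_j|/c⌉ for all j. Equivalently, no optimal weakly-ordered solution assigns fewer chunks to records with smaller CT values than to records with larger CT values. -/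
open Finset

/-- Valid cut sequence for an interval partitioning of `[n]` into exactly `m`
nonempty consecutive parts `P_t = (a_{t-1}, a_t]`. -/
def ValidCuts (n m : ℕ) (a : ℕ → ℕ) : Prop :=
  a 0 = 0 ∧ a m = n ∧ ∀ t < m, a t < a (t + 1)

/-- Cost of the interval partitioning given by cuts `a`:
`Σ_t (Σ_{i∈(a_t, a_{t+1}]} CT[i]) · ⌈(a_{t+1} − a_t)/c⌉`. -/
def intervalCost (CT : ℕ → ℕ) (c m : ℕ) (a : ℕ → ℕ) : ℕ :=
  ∑ t ∈ Finset.range m,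
    (∑ i ∈ Finset.Ioc (a t) (a (t + 1)), CT i) * ((a (t + 1) - a t + c - 1) / c)

/-- Auxiliary potential used to break ties among optimal solutions. -/
def measAux (c m : ℕ) (b : ℕ → ℕ) : ℕ :=
  ∑ s ∈ Finset.range m, s * ((b (s + 1) - b s + c - 1) / c)

lemma cuts_mono {m : ℕ} {a : ℕ → ℕ} (h : ∀ t < m, a t < a (t + 1)) :
    ∀ d s, s + d ≤ m → a s ≤ a (s + d) := by
  intro d
  induction d with
  | zero => intro s _; exact le_rfl
  | succ d ih =>
    intro s hs
    have h1 : a s ≤ a (s + d) := ih s (by omega)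
    have h2 : a (s + d) < a (s + d + 1) := h (s + d) (by omega)
    have he : s + (d + 1) = s + d + 1 := rfl
    rw [he]
    omega

lemma kdiv_le {c : ℕ} (hc : 1 ≤ c) (L : ℕ) : (L + c - 1) / c ≤ L := by
  have h1 : L + c - 1 ≤ L * c + (c - 1) := by
    have : L ≤ L * c := Nat.le_mul_of_pos_right L (by omega)
    omega
  calc (L + c - 1) / c ≤ (L * c + (c - 1)) / c := Nat.div_le_div_right h1
    _ = L + (c - 1) / c := by rw [mul_comm, Nat.mul_add_div (by omega)]
    _ = L := by rw [Nat.div_eq_of_lt (by omega), Nat.add_zero]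

lemma key_ineq (s1 s2 s1' s2' k1 k2 : ℕ) (hS : s1 + s2 = s1' + s2')
    (h12 : s1 ≤ s2') (hk : k1 ≤ k2) :
    s1' * k2 + s2' * k1 ≤ s1 * k1 + s2 * k2 := by
  zify at *
  nlinarith [mul_nonneg (sub_nonneg.mpr h12) (sub_nonneg.mpr hk)]

lemma sum_split (f : ℕ → ℕ) {m t : ℕ} (ht : t + 1 < m) :
    ∑ s ∈ range m, f s
      = f t + f (t + 1) + ∑ s ∈ ((range m).erase t).erase (t + 1), f s := by
  have h1 : t ∈ range m := by simp; omega
  have h2 : t + 1 ∈ (range m).erase t := by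
    simp [Finset.mem_erase]; omega
  rw [← Finset.add_sum_erase _ f h1, ← Finset.add_sum_erase _ f h2]
  ring

lemma sum_Ioc_shift_le (CT : ℕ → ℕ) (hCT : Monotone CT) (x y d : ℕ) :
    ∑ i ∈ Ioc x y, CT i ≤ ∑ i ∈ Ioc (x + d) (y + d), CT i := by
  rw [← Finset.map_add_right_Ioc, Finset.sum_map]
  refine Finset.sum_le_sum fun i _ => ?_
  exact hCT (by simp [addRightEmbedding])

/-- For a nondecreasing `CT`, some optimal interval partitioning into exactly `m`
consecutive parts is weakly-ordered: the chunk counts `⌈|P_t|/c⌉` are nonincreasing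
from left to right, so the leftmost part (smallest `CT` values) has the largest
chunk count. -/
theorem exists_optimal_weaklyOrdered_cuts {n m c : ℕ}
    (hn : 0 < n) (hm : 0 < m) (hc : 1 ≤ c) (hmn : m ≤ n)
    (CT : ℕ → ℕ) (hCT : Monotone CT) :
    ∃ a : ℕ → ℕ, ValidCuts n m a ∧
      (∀ b : ℕ → ℕ, ValidCuts n m b → intervalCost CT c m a ≤ intervalCost CT c m b) ∧
      (∀ t t' : ℕ, t ≤ t' → t' < m →
        (a (t' + 1) - a t' + c - 1) / c ≤ (a (t + 1) - a t + c - 1) / c) := by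
  classical
  set K := m * m * n + 1 with hK
  set Φ : (ℕ → ℕ) → ℕ := fun b => intervalCost CT c m b * K + measAux c m b with hΦ
  -- measure bound
  have hmeaslt : ∀ b : ℕ → ℕ, ValidCuts n m b → measAux c m b < K := by
    rintro b ⟨hb0, hbm, hbi⟩
    have hmono := cuts_mono hbi
    have hb : measAux c m b ≤ ∑ _s ∈ range m, m * n := by
      refine Finset.sum_le_sum fun s hs => ?_
      simp only [Finset.mem_range] at hs
      have h1 : (b (s + 1) - b s + c - 1) / c ≤ b (s + 1) - b s := kdiv_le hc _
      have h2 : b (s + 1) ≤ n := by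
        have h3 := hmono (m - (s + 1)) (s + 1) (by omega)
        rw [show s + 1 + (m - (s + 1)) = m by omega] at h3
        omega
      exact Nat.mul_le_mul (by omega) (by omega)
    rw [Finset.sum_const, Finset.card_range, smul_eq_mul] at hb
    have : m * (m * n) = m * m * n := by ring
    omega
  -- existence of some valid cuts
  have hex : ∃ k, ∃ b, ValidCuts n m b ∧ Φ b = k := by
    refine ⟨_, fun t => if t < m then t else n, ⟨?_, ?_, ?_⟩, rfl⟩
    · simp [hm]
    · simp
    · intro t htm
      by_cases h : t + 1 < m <;> simp [htm, h] <;> omega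
  obtain ⟨a, ha, hamin⟩ :
      ∃ a, ValidCuts n m a ∧ ∀ b : ℕ → ℕ, ValidCuts n m b → Φ a ≤ Φ b := by
    obtain ⟨b, hb, hbe⟩ := Nat.find_spec hex
    exact ⟨b, hb, fun b' hb' =>
      le_trans (le_of_eq hbe) (Nat.find_min' hex ⟨b', hb', rfl⟩)⟩
  obtain ⟨ha0, ham, hainc⟩ := ha
  have amono := cuts_mono hainc
  -- adjacent exchange
  have hadj : ∀ t, t + 1 < m →
      (a (t + 2) - a (t + 1) + c - 1) / c ≤ (a (t + 1) - a t + c - 1) / c := by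
    intro t ht
    by_contra hk
    push_neg at hk
    have hxy : a t < a (t + 1) := hainc t (by omega)
    have hyz : a (t + 1) < a (t + 2) := hainc (t + 1) ht
    set x := a t with hx
    set y := a (t + 1) with hy
    set z := a (t + 2) with hz
    set b : ℕ → ℕ := fun s => if s = t + 1 then x + (z - y) else a s with hbdef
    have hb0 : ∀ s, s ≠ t + 1 → b s = a s := fun s hs => if_neg hs
    have hbt1 : b (t + 1) = x + (z - y) := if_pos rfl
    have hbv : ValidCuts n m b := by
      refine ⟨?_, ?_, ?_⟩
      · rw [hb0 0 (by omega)]; exact ha0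
      · rw [hb0 m (by omega)]; exact ham
      · intro s hs
        rcases eq_or_ne s t with rfl | hst
        · rw [hb0 s (by omega), hbt1]; omega
        rcases eq_or_ne s (t + 1) with rfl | hst1
        · rw [hbt1, hb0 (t + 1 + 1) (by omega)]
          show x + (z - y) < z
          omega
        · rw [hb0 s hst1, hb0 (s + 1) (by omega)]
          exact hainc s hs
    -- abbreviations for the four sums
    have hbt : b t = x := hb0 t (by omega)
    have hbt2 : b (t + 2) = z := hb0 (t + 2) (by omega)
    have e1 : b (t + 1) - b t = z - y := by rw [hbt, hbt1]; omega
    have e2 : b (t + 2) - b (t + 1) = y - x := by rw [hbt2, hbt1]; omega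
    have herased : ∀ f g : ℕ → ℕ,
        (∀ s, s ≠ t → s ≠ t + 1 → f s = g s) →
        ∑ s ∈ ((range m).erase t).erase (t + 1), f s
          = ∑ s ∈ ((range m).erase t).erase (t + 1), g s := by
      intro f g hfg
      refine Finset.sum_congr rfl fun s hs => ?_
      simp only [Finset.mem_erase, Finset.mem_range] at hs
      exact hfg s hs.2.1 hs.1
    -- the four partial sums
    have hsum : (∑ i ∈ Ioc x y, CT i) + (∑ i ∈ Ioc y z, CT i)
        = (∑ i ∈ Ioc x (x + (z - y)), CT i) + ∑ i ∈ Ioc (x + (z - y)) z, CT i := by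
      rw [Finset.sum_Ioc_consecutive _ (by omega : x ≤ y) (by omega : y ≤ z),
          Finset.sum_Ioc_consecutive _ (by omega : x ≤ x + (z - y)) (by omega : x + (z - y) ≤ z)]
    have h12 : (∑ i ∈ Ioc x y, CT i) ≤ ∑ i ∈ Ioc (x + (z - y)) z, CT i := by
      have h := sum_Ioc_shift_le CT hCT x y (z - y)
      rwa [show y + (z - y) = z by omega] at h
    -- cost comparison
    have hcost : intervalCost CT c m b ≤ intervalCost CT c m a := by
      unfold intervalCost
      rw [sum_split (fun s => (∑ i ∈ Ioc (b s) (b (s + 1)), CT i)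
            * ((b (s + 1) - b s + c - 1) / c)) ht,
          sum_split (fun s => (∑ i ∈ Ioc (a s) (a (s + 1)), CT i)
            * ((a (s + 1) - a s + c - 1) / c)) ht,
          herased _ _ (fun s hs1 hs2 => by
            rw [hb0 s hs2, hb0 (s + 1) (by omega)])]
      apply Nat.add_le_add_right
      show (∑ i ∈ Ioc (b t) (b (t + 1)), CT i) * ((b (t + 1) - b t + c - 1) / c)
            + (∑ i ∈ Ioc (b (t + 1)) (b (t + 2)), CT i) * ((b (t + 2) - b (t + 1) + c - 1) / c)
          ≤ (∑ i ∈ Ioc (a t) (a (t + 1)), CT i) * ((a (t + 1) - a t + c - 1) / c)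
            + (∑ i ∈ Ioc (a (t + 1)) (a (t + 2)), CT i) * ((a (t + 2) - a (t + 1) + c - 1) / c)
      rw [hbt, hbt1, hbt2, show x + (z - y) - x = z - y by omega,
        show z - (x + (z - y)) = y - x by omega, ← hx, ← hy, ← hz]
      exact key_ineq _ _ _ _ _ _ hsum h12 (le_of_lt hk)
    -- measure strictly decreases
    have hmeas : measAux c m b < measAux c m a := by
      unfold measAux
      rw [sum_split (fun s => s * ((b (s + 1) - b s + c - 1) / c)) ht,
          sum_split (fun s => s * ((a (s + 1) - a s + c - 1) / c)) ht,
          herased _ _ (fun s hs1 hs2 => by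
            rw [hb0 s hs2, hb0 (s + 1) (by omega)])]
      apply Nat.add_lt_add_right
      show t * ((b (t + 1) - b t + c - 1) / c)
            + (t + 1) * ((b (t + 2) - b (t + 1) + c - 1) / c)
          < t * ((a (t + 1) - a t + c - 1) / c)
            + (t + 1) * ((a (t + 2) - a (t + 1) + c - 1) / c)
      rw [e1, e2, ← hx, ← hy, ← hz]
      set k1 := (y - x + c - 1) / c
      set k2 := (z - y + c - 1) / c
      nlinarith
    have : Φ b < Φ a := by
      have h1 : intervalCost CT c m b * K ≤ intervalCost CT c m a * K :=
        Nat.mul_le_mul_right K hcost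
      simp only [hΦ]
      omega
    have h2 := hamin b hbv
    omega
  refine ⟨a, ⟨ha0, ham, hainc⟩, ?_, ?_⟩
  · intro b hb
    have h1 := hamin b hb
    have h2 := hmeaslt a ⟨ha0, ham, hainc⟩
    have h3 := hmeaslt b hb
    by_contra hcon
    push_neg at hcon
    have h4 : intervalCost CT c m b * K + K ≤ intervalCost CT c m a * K := by
      calc intervalCost CT c m b * K + K = (intervalCost CT c m b + 1) * K := by ring
        _ ≤ intervalCost CT c m a * K := Nat.mul_le_mul_right K hcon
    simp only [hΦ] at h1
    omega
  · intro t t' htt' ht'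
    obtain ⟨d, rfl⟩ : ∃ d, t' = t + d := ⟨t' - t, by omega⟩
    clear htt'
    induction d with
    | zero => exact le_rfl
    | succ d ih =>
      have h1 := hadj (t + d) (by omega)
      have h2 := ih (by omega)
      exact le_trans h1 h2
end
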